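/- arXiv:2410.22930 — 3 statements merged into one kernel-verified Lean document; each statement's English description precedes it below -/
import Mathlib

section
/- Let C be a finite subset of the unit sphere S^{n+2} in R^{n+3} spanning (together with 0) the subspace R^n × {0}³, and let x be a point of S^{n+2} not in that span. Then the set of points a on S^{n+2} with |a - c| = |x - c| for all c in C is exactly the intersection of the unit sphere with the affine 3-plane {(x_1,...,x_n)} × R³ (where (x_1,...,x_n) is the projection of x onto the span of C), and this set is a 2-sphere of radius ρ with ρ² = 1 - (x_1² + ... + x_n²) > 0. -/
/-!
For unit vectors `a`, `x` we have `|a - c|² - |x - c|² = -2⟪a - x, c⟫`, so the equidistance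
conditions say exactly that `a - x` is orthogonal to `C`, hence to its span `ℝⁿ × 0`, i.e. that
`a` and `x` share their first `n` coordinates. The remaining three coordinates of such an `a`
then have square sum `1 - (x₁² + ⋯ + xₙ²)`, which is positive because `x` has a nonzero
coordinate outside the span of `C`.
-/

open Finset RealInnerProductSpace

section InnerProductSpace

variable {E : Type*} [NormedAddCommGroup E] [InnerProductSpace ℝ E]

theorem dist_eq_dist_iff_inner_sub_eq_zero {a x : E} (h : ‖a‖ = ‖x‖) (c : E) :
    dist a c = dist x c ↔ ⟪a - x, c⟫ = 0 := by
  rw [← sq_eq_sq₀ dist_nonneg dist_nonneg, dist_eq_norm, dist_eq_norm, norm_sub_sq_real,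
    norm_sub_sq_real, h, inner_sub_left]
  constructor <;> intro <;> linarith

theorem forall_inner_eq_zero_iff_forall_mem_span {s : Set E} {v : E} :
    (∀ c ∈ s, ⟪v, c⟫ = 0) ↔ ∀ w ∈ Submodule.span ℝ s, ⟪v, w⟫ = 0 := by
  refine ⟨fun h w hw => ?_, fun h c hc => h c (Submodule.subset_span hc)⟩
  have hle : Submodule.span ℝ s ≤ (ℝ ∙ v)ᗮ := Submodule.span_le.2 fun c hc =>
    Submodule.mem_orthogonal_singleton_iff_inner_right.2 (h c hc)
  exact Submodule.mem_orthogonal_singleton_iff_inner_right.1 (hle hw)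

end InnerProductSpace

namespace EuclideanSpace

variable {m n : ℕ}

theorem forall_inner_eq_zero_iff_of_coord_subspace (v : EuclideanSpace ℝ (Fin m)) :
    (∀ w : EuclideanSpace ℝ (Fin m), (∀ i : Fin m, n ≤ (i : ℕ) → w i = 0) → ⟪v, w⟫ = 0) ↔
      ∀ i : Fin m, (i : ℕ) < n → v i = 0 := by
  constructor
  · intro h i hi
    have hsingle := h (single i 1) fun j hj => by
      rw [PiLp.single_apply, if_neg (by rintro rfl; omega)]
    simpa [inner_single_right] using hsingle
  · intro h w hw
    refine Finset.sum_eq_zero fun i _ => ?_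
    rcases lt_or_ge (i : ℕ) n with hi | hi
    · simp [h i hi]
    · simp [hw i hi]

theorem forall_inner_eq_zero_iff_of_span_eq {s : Set (EuclideanSpace ℝ (Fin m))}
    (hspan : (Submodule.span ℝ s : Set (EuclideanSpace ℝ (Fin m))) =
      {w | ∀ i : Fin m, n ≤ (i : ℕ) → w i = 0})
    (v : EuclideanSpace ℝ (Fin m)) :
    (∀ c ∈ s, ⟪v, c⟫ = 0) ↔ ∀ i : Fin m, (i : ℕ) < n → v i = 0 := by
  rw [forall_inner_eq_zero_iff_forall_mem_span, ← forall_inner_eq_zero_iff_of_coord_subspace]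
  refine forall_congr' fun w => ?_
  rw [← SetLike.mem_coe, hspan, Set.mem_ofPred_eq]

theorem forall_dist_eq_iff_of_span_eq {s : Set (EuclideanSpace ℝ (Fin m))}
    (hspan : (Submodule.span ℝ s : Set (EuclideanSpace ℝ (Fin m))) =
      {w | ∀ i : Fin m, n ≤ (i : ℕ) → w i = 0})
    {a x : EuclideanSpace ℝ (Fin m)} (h : ‖a‖ = ‖x‖) :
    (∀ c ∈ s, dist a c = dist x c) ↔ ∀ i : Fin m, (i : ℕ) < n → a i = x i := by
  simp_rw [dist_eq_dist_iff_inner_sub_eq_zero h, forall_inner_eq_zero_iff_of_span_eq hspan,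
    PiLp.sub_apply, sub_eq_zero]

theorem sum_sq_lt_add_sum_sq_ge (n : ℕ) (y : EuclideanSpace ℝ (Fin m)) :
    (∑ i : Fin m, if (i : ℕ) < n then y i ^ 2 else 0) +
      (∑ i : Fin m, if n ≤ (i : ℕ) then y i ^ 2 else 0) = ‖y‖ ^ 2 := by
  rw [← Finset.sum_add_distrib, real_norm_sq_eq]
  refine Finset.sum_congr rfl fun i _ => ?_
  split_ifs <;> first | omega | ring

theorem sum_sq_ge_pos_of_notMem {x : EuclideanSpace ℝ (Fin m)}
    (hx : x ∉ {w : EuclideanSpace ℝ (Fin m) | ∀ i : Fin m, n ≤ (i : ℕ) → w i = 0}) :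
    0 < ∑ i : Fin m, if n ≤ (i : ℕ) then x i ^ 2 else 0 := by
  simp only [Set.mem_ofPred_eq, not_forall] at hx
  obtain ⟨i, hi, hxi⟩ := hx
  refine Finset.sum_pos' (fun j _ => by positivity) ⟨i, Finset.mem_univ i, ?_⟩
  rw [if_pos hi]
  positivity

end EuclideanSpace

theorem stmt0_general (n : ℕ) (C : Finset (EuclideanSpace ℝ (Fin (n+3))))
    (hspan : (Submodule.span ℝ (C : Set (EuclideanSpace ℝ (Fin (n+3)))) :
        Set (EuclideanSpace ℝ (Fin (n+3)))) =
      {v | ∀ i : Fin (n+3), n ≤ (i : ℕ) → v i = 0})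
    (x : EuclideanSpace ℝ (Fin (n+3))) (hx : ‖x‖ = 1)
    (hxC : x ∉ Submodule.span ℝ (C : Set (EuclideanSpace ℝ (Fin (n+3))))) :
    {a : EuclideanSpace ℝ (Fin (n+3)) | ‖a‖ = 1 ∧ ∀ c ∈ C, dist a c = dist x c} =
      {a : EuclideanSpace ℝ (Fin (n+3)) | ‖a‖ = 1 ∧ ∀ i : Fin (n+3), (i : ℕ) < n → a i = x i} ∧
    0 < 1 - ∑ i : Fin (n+3), (if (i : ℕ) < n then (x i)^2 else 0) ∧
    ∀ a : EuclideanSpace ℝ (Fin (n+3)), ‖a‖ = 1 → (∀ c ∈ C, dist a c = dist x c) →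
      ∑ i : Fin (n+3), (if n ≤ (i : ℕ) then (a i)^2 else 0) =
        1 - ∑ i : Fin (n+3), (if (i : ℕ) < n then (x i)^2 else 0) := by
  have hdist (a : EuclideanSpace ℝ (Fin (n+3))) (ha : ‖a‖ = 1) :=
    EuclideanSpace.forall_dist_eq_iff_of_span_eq hspan (ha.trans hx.symm)
  have hsplit (y : EuclideanSpace ℝ (Fin (n+3))) (hy : ‖y‖ = 1) :=
    (EuclideanSpace.sum_sq_lt_add_sum_sq_ge n y).trans (by rw [hy, one_pow])
  refine ⟨?_, ?_, fun a ha had => ?_⟩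
  · ext a
    exact and_congr_right (hdist a)
  · have hhigh := EuclideanSpace.sum_sq_ge_pos_of_notMem (n := n) (x := x) (by rwa [← hspan])
    linarith [hsplit x hx]
  · have hlow : (∑ i : Fin (n+3), if (i : ℕ) < n then a i ^ 2 else 0) =
        ∑ i : Fin (n+3), if (i : ℕ) < n then x i ^ 2 else 0 :=
      Finset.sum_congr rfl fun i _ => by
        split_ifs with hi
        · rw [(hdist a ha).1 had i hi]
        · rfl
    linarith [hsplit a ha, hsplit x hx]

theorem stmt0 (n : ℕ) (C : Finset (EuclideanSpace ℝ (Fin (n+3))))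
    (hC : ∀ c ∈ C, ‖c‖ = 1)
    (hspan : (Submodule.span ℝ (C : Set (EuclideanSpace ℝ (Fin (n+3)))) :
        Set (EuclideanSpace ℝ (Fin (n+3)))) =
      {v | ∀ i : Fin (n+3), n ≤ (i : ℕ) → v i = 0})
    (x : EuclideanSpace ℝ (Fin (n+3))) (hx : ‖x‖ = 1)
    (hxC : x ∉ Submodule.span ℝ (C : Set (EuclideanSpace ℝ (Fin (n+3))))) :
    {a : EuclideanSpace ℝ (Fin (n+3)) | ‖a‖ = 1 ∧ ∀ c ∈ C, dist a c = dist x c} =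
      {a : EuclideanSpace ℝ (Fin (n+3)) | ‖a‖ = 1 ∧ ∀ i : Fin (n+3), (i : ℕ) < n → a i = x i} ∧
    0 < 1 - ∑ i : Fin (n+3), (if (i : ℕ) < n then (x i)^2 else 0) ∧
    ∀ a : EuclideanSpace ℝ (Fin (n+3)), ‖a‖ = 1 → (∀ c ∈ C, dist a c = dist x c) →
      ∑ i : Fin (n+3), (if n ≤ (i : ℕ) then (a i)^2 else 0) =
        1 - ∑ i : Fin (n+3), (if (i : ℕ) < n then (x i)^2 else 0) :=
  stmt0_general n C hspan x hx hxC
end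

section
/- Let S² be a 2-sphere of radius ρ in R³ and let a, b ∈ S² be non-antipodal points whose angular distance (angle at the center) is less than φ for some 0 < φ < π. Then there exists a point z ∈ S² such that the angles between z and a, and between z and b, are both strictly less than φ/2, and z does not lie on the great circle through a and b. -/
/-!
The midpoint direction `a + b` makes the angle `∠(a, b) / 2 < φ / 2` with both `a` and `b`.
Angles depend continuously on nonzero vectors, so tilting `a + b` slightly out of the plane
`span {a, b}` keeps both angles below `φ / 2`; rescaling the tilted vector onto the sphere
changes no angle.
-/

open Filter Topology Submodule

theorem Submodule.span_pair_ne_top_of_two_lt_finrank {K M : Type*} [DivisionRing K]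
    [AddCommGroup M] [Module K M] (h : 2 < Module.finrank K M) (x y : M) :
    span K {x, y} ≠ ⊤ := by
  classical
  intro htop
  have hle : Module.finrank K (span K ({x, y} : Set M)) ≤ 2 := by
    refine (finrank_span_le_card ({x, y} : Set M)).trans ?_
    rw [Set.toFinset_insert, Set.toFinset_singleton]
    exact Finset.card_le_two
  rw [htop, finrank_top] at hle
  omega

namespace InnerProductGeometry

variable {V : Type*} [NormedAddCommGroup V] [InnerProductSpace ℝ V]

theorem arccos_inner_div_sq_eq_angle {x y : V} {ρ : ℝ} (hx : ‖x‖ = ρ) (hy : ‖y‖ = ρ) :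
    Real.arccos (inner ℝ x y / ρ ^ 2) = angle x y := by
  rw [angle, hx, hy, sq]

theorem angle_add_eq_angle_add_of_norm_eq {x y : V} (h : ‖x‖ = ‖y‖) :
    angle x (x + y) = angle y (x + y) := by
  unfold angle
  rw [inner_add_right, inner_add_right, real_inner_self_eq_norm_sq, real_inner_self_eq_norm_sq,
    h, real_inner_comm, add_comm (‖y‖ ^ 2)]

theorem angle_add_eq_half_angle_of_norm_eq {x y : V} (h : ‖x‖ = ‖y‖) (hy : y ≠ 0) :
    angle x (x + y) = angle x y / 2 := by
  rw [angle_eq_angle_add_add_angle_add x hy, ← angle_add_eq_angle_add_of_norm_eq h]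
  ring

theorem eventually_angle_add_smul_lt {x y : V} (hx : x ≠ 0) (hy : y ≠ 0) (v : V) {α : ℝ}
    (h : angle x y < α) : ∀ᶠ s : ℝ in 𝓝 0, angle (x + s • v) y < α := by
  have hcont : ContinuousAt (fun s : ℝ => angle (x + s • v) y) 0 :=
    (continuousAt_angle (x := (x + (0 : ℝ) • v, y)) (by simpa) hy).comp
      (f := fun s : ℝ => (x + s • v, y)) (by fun_prop)
  exact hcont.eventually (gt_mem_nhds (by simpa using h))

theorem exists_norm_eq_angle_lt_half_notMem_span {a b : V} (hab : ‖a‖ = ‖b‖) (hant : b ≠ -a)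
    (hspan : span ℝ {a, b} ≠ ⊤) {φ : ℝ} (hφ : angle a b < φ) :
    ∃ z : V, ‖z‖ = ‖a‖ ∧ angle z a < φ / 2 ∧ angle z b < φ / 2 ∧ z ∉ span ℝ {a, b} := by
  have hsum : a + b ≠ 0 := fun h => hant (eq_neg_of_add_eq_zero_right h)
  have ha : a ≠ 0 := by
    rintro rfl
    exact hant (by simpa [eq_comm] using hab)
  have hb : b ≠ 0 := by
    rintro rfl
    exact hant (by simpa using hab)
  have hsum_a : angle (a + b) a < φ / 2 := by
    rw [angle_comm, angle_add_eq_half_angle_of_norm_eq hab hb]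
    linarith
  have hsum_b : angle (a + b) b < φ / 2 := by
    rw [angle_comm, add_comm, angle_add_eq_half_angle_of_norm_eq hab.symm ha, angle_comm]
    linarith
  obtain ⟨v, hv⟩ : ∃ v, v ∉ span ℝ {a, b} := by
    by_contra! h
    exact hspan (eq_top_iff.2 fun v _ => h v)
  obtain ⟨s, ⟨hsa, hsb⟩, hs⟩ :=
    (((eventually_angle_add_smul_lt hsum ha v hsum_a).and
      (eventually_angle_add_smul_lt hsum hb v hsum_b)).filter_mono nhdsWithin_le_nhds
      |>.and (self_mem_nhdsWithin (s := {(0 : ℝ)}ᶜ))).exists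
  set w := a + b + s • v
  have hw : w ∉ span ℝ {a, b} := by
    intro hw
    have hsv : s • v ∈ span ℝ {a, b} := by
      simpa [w] using sub_mem hw (add_mem (subset_span (Set.mem_insert a {b}))
        (subset_span (Set.mem_insert_of_mem a rfl)))
    exact hv ((smul_mem_iff _ hs).1 hsv)
  have hw0 : 0 < ‖w‖ := norm_pos_iff.2 fun h => hw (h ▸ zero_mem _)
  have hr : 0 < ‖a‖ / ‖w‖ := div_pos (norm_pos_iff.2 ha) hw0
  refine ⟨(‖a‖ / ‖w‖) • w, ?_, ?_, ?_, ?_⟩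
  · rw [norm_smul, Real.norm_of_nonneg hr.le, div_mul_cancel₀ _ hw0.ne']
  · rwa [angle_smul_left_of_pos _ _ hr]
  · rwa [angle_smul_left_of_pos _ _ hr]
  · rwa [smul_mem_iff _ hr.ne']

end InnerProductGeometry

open InnerProductGeometry in
theorem stmt3_general (ρ φ : ℝ)
    (a b : EuclideanSpace ℝ (Fin 3)) (ha : ‖a‖ = ρ) (hb : ‖b‖ = ρ)
    (hant : b ≠ -a) (hang : Real.arccos ((inner ℝ a b : ℝ) / ρ ^ 2) < φ) :
    ∃ z : EuclideanSpace ℝ (Fin 3), ‖z‖ = ρ ∧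
      Real.arccos ((inner ℝ z a : ℝ) / ρ ^ 2) < φ / 2 ∧
      Real.arccos ((inner ℝ z b : ℝ) / ρ ^ 2) < φ / 2 ∧
      z ∉ Submodule.span ℝ ({a, b} : Set (EuclideanSpace ℝ (Fin 3))) := by
  have hspan := span_pair_ne_top_of_two_lt_finrank (K := ℝ) (by simp) a b
  rw [arccos_inner_div_sq_eq_angle ha hb] at hang
  obtain ⟨z, hz, hza, hzb, hzK⟩ :=
    exists_norm_eq_angle_lt_half_notMem_span (ha.trans hb.symm) hant hspan hang
  rw [ha] at hz
  exact ⟨z, hz, by rwa [arccos_inner_div_sq_eq_angle hz ha],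
    by rwa [arccos_inner_div_sq_eq_angle hz hb], hzK⟩

theorem stmt3 (ρ φ : ℝ) (hρ : 0 < ρ) (hφ : 0 < φ) (hφπ : φ < Real.pi)
    (a b : EuclideanSpace ℝ (Fin 3)) (ha : ‖a‖ = ρ) (hb : ‖b‖ = ρ)
    (hant : b ≠ -a) (hang : Real.arccos ((inner ℝ a b : ℝ) / ρ ^ 2) < φ) :
    ∃ z : EuclideanSpace ℝ (Fin 3), ‖z‖ = ρ ∧
      Real.arccos ((inner ℝ z a : ℝ) / ρ ^ 2) < φ / 2 ∧
      Real.arccos ((inner ℝ z b : ℝ) / ρ ^ 2) < φ / 2 ∧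
      z ∉ Submodule.span ℝ ({a, b} : Set (EuclideanSpace ℝ (Fin 3))) :=
  stmt3_general ρ φ a b ha hb hant hang
end

section
/- Let S be a countable dense subset of (0, ∞) ∩ R. For any finite affinely independent configuration (0, x_1, ..., x_n) of points with x_1, ..., x_n on the unit sphere of R^n, and any ε > 0, there exists a point z on the unit sphere of R^{n+1} (containing R^n) such that (0, x_1, ..., x_n, z) is affinely independent, all distances |z − x_i| belong to S, and |⟨z, x_i⟩| < ε for all i. -/
/-!
Pick `s i ∈ S` slightly below `√2`, so that `c i = 1 - s i ^ 2 / 2` is positive and small.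
The Gram matrix of the `x i` is invertible, so some `w ∈ ℝⁿ` has `⟪x i, w⟫ = c i`, and `w` is
small because it depends linearly on `c`. Adding `√(1 - ‖w‖ ^ 2)` times the new unit vector
lifts `w` to a unit vector `z ∈ ℝⁿ⁺¹` outside `ℝⁿ` with `⟪z, x i⟫ = c i`, hence
`‖z - x i‖ ^ 2 = 2 - 2 c i = s i ^ 2`.
-/

/-- The canonical embedding of `ℝ^n` into `ℝ^(n+1)` (appending a zero coordinate). -/
noncomputable def embedSucc (n : ℕ) (v : EuclideanSpace ℝ (Fin n)) :
    EuclideanSpace ℝ (Fin (n + 1)) :=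
  (WithLp.equiv 2 (Fin (n + 1) → ℝ)).symm
    (fun j => if h : (j : ℕ) < n then v ⟨j, h⟩ else 0)

open scoped InnerProductSpace Topology Matrix
open Filter

section InnerProductSpace

variable {E : Type*} [NormedAddCommGroup E] [InnerProductSpace ℝ E]

theorem exists_linearMap_inner_eq {ι : Type*} [Fintype ι] {x : ι → E}
    (hx : LinearIndependent ℝ x) :
    ∃ W : (ι → ℝ) →ₗ[ℝ] E, ∀ c i, ⟪x i, W c⟫_ℝ = c i := by
  classical
  set G := Matrix.gram ℝ x
  have hG : IsUnit G.det := (Matrix.det_gram_ne_zero_iff_linearIndependent.mpr hx).isUnit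
  refine ⟨Fintype.linearCombination ℝ x ∘ₗ Matrix.toLin' G⁻¹, fun c i => ?_⟩
  have : ⟪x i, Fintype.linearCombination ℝ x (G⁻¹ *ᵥ c)⟫_ℝ = (G *ᵥ (G⁻¹ *ᵥ c)) i := by
    simp [Fintype.linearCombination_apply, inner_sum, real_inner_smul_right, Matrix.mulVec,
      dotProduct, G, Matrix.gram_apply, mul_comm]
  simpa [Matrix.mulVec_mulVec, Matrix.mul_nonsing_inv G hG] using this

theorem eventually_exists_norm_lt_one_inner_eq {ι : Type*} [Fintype ι] {x : ι → E}
    (hx : LinearIndependent ℝ x) :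
    ∀ᶠ c in 𝓝 (0 : ι → ℝ), ∃ w : E, ‖w‖ < 1 ∧ ∀ i, ⟪x i, w⟫_ℝ = c i := by
  obtain ⟨W, hW⟩ := exists_linearMap_inner_eq hx
  have hW0 : Tendsto W (𝓝 0) (𝓝 0) := by
    simpa using (LinearMap.continuous_of_finiteDimensional W).tendsto 0
  filter_upwards [hW0.norm.eventually (gt_mem_nhds (norm_zero (E := E) ▸ one_pos))] with c hc
  exact ⟨W c, hc, hW c⟩

theorem exists_norm_eq_one_notMem_inner_eq {K : Submodule ℝ E} {e : E} (he : e ∈ Kᗮ)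
    (he1 : ‖e‖ = 1) {w : E} (hw : w ∈ K) (hw1 : ‖w‖ < 1) :
    ∃ z : E, ‖z‖ = 1 ∧ z ∉ K ∧ ∀ y ∈ K, ⟪z, y⟫_ℝ = ⟪w, y⟫_ℝ := by
  set t := √(1 - ‖w‖ ^ 2)
  have ht : 0 < t := Real.sqrt_pos.mpr (by nlinarith [norm_nonneg w])
  refine ⟨w + t • e, ?_, fun hz => ?_, fun y hy => ?_⟩
  · have hwe : ⟪w, t • e⟫_ℝ = 0 := by
      rw [real_inner_smul_right, K.inner_right_of_mem_orthogonal hw he, mul_zero]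
    have hpyth := norm_add_sq_eq_norm_sq_add_norm_sq_real hwe
    rw [norm_smul, Real.norm_of_nonneg ht.le, he1, mul_one] at hpyth
    have : t * t = 1 - ‖w‖ ^ 2 := Real.mul_self_sqrt (by nlinarith [norm_nonneg w])
    nlinarith [norm_nonneg (w + t • e)]
  · have hte : t • e ∈ K ⊓ Kᗮ :=
      ⟨by simpa using K.sub_mem hz hw, Kᗮ.smul_mem t he⟩
    rw [K.inf_orthogonal_eq_bot, Submodule.mem_bot, smul_eq_zero] at hte
    rcases hte with h | h
    · exact ht.ne' h
    · simp [h] at he1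
  · rw [inner_add_left, real_inner_smul_left, K.inner_left_of_mem_orthogonal hy he, mul_zero,
      add_zero]

theorem dist_sq_eq_two_sub_two_inner {z y : E} (hz : ‖z‖ = 1) (hy : ‖y‖ = 1) :
    dist z y ^ 2 = 2 - 2 * ⟪z, y⟫_ℝ := by
  rw [dist_eq_norm, norm_sub_sq_real, hz, hy]
  ring

end InnerProductSpace

/-- `1 - s ^ 2 / 2` is the inner product of two unit vectors at distance `s`. -/
theorem exists_mem_one_sub_sq_div_two_mem_Ioo {S : Set ℝ}
    (hS : ∀ a b : ℝ, 0 < a → a < b → ∃ s ∈ S, a < s ∧ s < b) {δ : ℝ} (hδ : 0 < δ) :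
    ∃ s ∈ S, 0 < s ∧ 1 - s ^ 2 / 2 ∈ Set.Ioo 0 δ := by
  have hlt : √(max (2 - 2 * δ) 1) < √2 :=
    Real.sqrt_lt_sqrt (by positivity) (max_lt (by linarith) one_lt_two)
  obtain ⟨s, hs, hlo, hhi⟩ := hS _ _ (Real.sqrt_pos.mpr (by positivity)) hlt
  have hs0 : 0 < s := lt_of_le_of_lt (Real.sqrt_nonneg _) hlo
  have hlo' : max (2 - 2 * δ) 1 < s ^ 2 := (Real.sqrt_lt' hs0).mp hlo
  have hhi' : s ^ 2 < 2 := (Real.lt_sqrt hs0.le).mp hhi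
  exact ⟨s, hs, hs0, by linarith, by linarith [le_max_left (2 - 2 * δ) 1]⟩

section Embedding

variable (n : ℕ)

theorem embedSucc_apply (v : EuclideanSpace ℝ (Fin n)) (j : Fin (n + 1)) :
    embedSucc n v j = if h : (j : ℕ) < n then v ⟨j, h⟩ else 0 := rfl

theorem embedSucc_castSucc (v : EuclideanSpace ℝ (Fin n)) (i : Fin n) :
    embedSucc n v (Fin.castSucc i) = v i := by
  simp [embedSucc]

theorem embedSucc_last (v : EuclideanSpace ℝ (Fin n)) : embedSucc n v (Fin.last n) = 0 := by
  simp [embedSucc]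

theorem inner_embedSucc (u v : EuclideanSpace ℝ (Fin n)) :
    ⟪embedSucc n u, embedSucc n v⟫_ℝ = ⟪u, v⟫_ℝ := by
  simp [PiLp.inner_apply, Fin.sum_univ_castSucc, embedSucc_castSucc, embedSucc_last]

noncomputable def embedSuccLinearIsometry :
    EuclideanSpace ℝ (Fin n) →ₗᵢ[ℝ] EuclideanSpace ℝ (Fin (n + 1)) :=
  LinearMap.isometryOfInner
    { toFun := embedSucc n
      map_add' := fun u v => by
        ext j
        simp only [embedSucc_apply, PiLp.add_apply]
        split <;> simp
      map_smul' := fun a u => by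
        ext j
        simp only [embedSucc_apply, PiLp.smul_apply]
        split <;> simp }
    (inner_embedSucc n)

@[simp]
theorem embedSuccLinearIsometry_apply (v : EuclideanSpace ℝ (Fin n)) :
    embedSuccLinearIsometry n v = embedSucc n v := rfl

@[simp]
theorem norm_embedSucc (v : EuclideanSpace ℝ (Fin n)) : ‖embedSucc n v‖ = ‖v‖ :=
  (embedSuccLinearIsometry n).norm_map v

theorem single_last_mem_orthogonal_range_embedSucc :
    EuclideanSpace.single (Fin.last n) (1 : ℝ) ∈
      (LinearMap.range (embedSuccLinearIsometry n).toLinearMap)ᗮ := by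
  rintro _ ⟨v, rfl⟩
  simp [EuclideanSpace.inner_single_right, embedSucc_last]

theorem exists_norm_eq_one_notMem_range_embedSucc {w : EuclideanSpace ℝ (Fin n)} (hw : ‖w‖ < 1) :
    ∃ z, ‖z‖ = 1 ∧ z ∉ LinearMap.range (embedSuccLinearIsometry n).toLinearMap ∧
      ∀ v, ⟪z, embedSucc n v⟫_ℝ = ⟪w, v⟫_ℝ := by
  obtain ⟨z, hz1, hzf, hz⟩ := exists_norm_eq_one_notMem_inner_eq
    (single_last_mem_orthogonal_range_embedSucc n) (by simp) (LinearMap.mem_range_self _ w)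
    (by simpa using hw)
  refine ⟨z, hz1, hzf, fun v => ?_⟩
  simpa [inner_embedSucc] using hz _ (LinearMap.mem_range_self _ v)

end Embedding

theorem LinearIndependent.finSnoc_comp_of_notMem_range {K V V' : Type*} [DivisionRing K]
    [AddCommGroup V] [Module K V] [AddCommGroup V'] [Module K V'] {m : ℕ} {x : Fin m → V}
    (hx : LinearIndependent K x) {f : V →ₗ[K] V'} (hf : Function.Injective f) {z : V'}
    (hz : z ∉ LinearMap.range f) : LinearIndependent K (Fin.snoc (f ∘ x) z) := by
  refine linearIndependent_finSnoc.mpr ⟨hx.map' f (LinearMap.ker_eq_bot_of_injective hf), ?_⟩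
  refine fun hspan => hz (Submodule.span_le.mpr ?_ hspan)
  rintro _ ⟨i, rfl⟩
  exact LinearMap.mem_range_self f (x i)

theorem stmt12_general (S : Set ℝ)
    (hSdense : ∀ a b : ℝ, 0 < a → a < b → ∃ s ∈ S, a < s ∧ s < b)
    (n : ℕ) (x : Fin n → EuclideanSpace ℝ (Fin n))
    (hnorm : ∀ i, ‖x i‖ = 1) (hli : LinearIndependent ℝ x)
    (ε : ℝ) (hε : 0 < ε) :
    ∃ z : EuclideanSpace ℝ (Fin (n + 1)), ‖z‖ = 1 ∧
      LinearIndependent ℝ (Fin.snoc (fun i => embedSucc n (x i)) z) ∧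
      (∀ i, dist z (embedSucc n (x i)) ∈ S) ∧
      ∀ i, |(inner ℝ z (embedSucc n (x i)) : ℝ)| < ε := by
  obtain ⟨r, hr, hsolve⟩ :=
    Metric.eventually_nhds_iff.mp (eventually_exists_norm_lt_one_inner_eq hli)
  choose s hsS hs0 hc using
    fun _ : Fin n => exists_mem_one_sub_sq_div_two_mem_Ioo hSdense (lt_min hr hε)
  obtain ⟨w, hw1, hwx⟩ := hsolve (y := fun i => 1 - s i ^ 2 / 2) <| by
    rw [dist_zero_right, pi_norm_lt_iff hr]
    exact fun i => (abs_of_pos (hc i).1).trans_lt ((hc i).2.trans_le (min_le_left _ _))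
  obtain ⟨z, hz1, hzf, hz⟩ := exists_norm_eq_one_notMem_range_embedSucc n hw1
  have hzx : ∀ i, ⟪z, embedSucc n (x i)⟫_ℝ = 1 - s i ^ 2 / 2 := fun i => by
    rw [hz, real_inner_comm, hwx]
  refine ⟨z, hz1, ?_, fun i => ?_, fun i => ?_⟩
  · exact hli.finSnoc_comp_of_notMem_range (embedSuccLinearIsometry n).injective hzf
  · have hd : dist z (embedSucc n (x i)) ^ 2 = s i ^ 2 := by
      rw [dist_sq_eq_two_sub_two_inner hz1 (by simpa using hnorm i), hzx]
      ring
    exact (sq_eq_sq₀ dist_nonneg (hs0 i).le).mp hd ▸ hsS i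
  · rw [hzx, abs_of_pos (hc i).1]
    exact (hc i).2.trans_le (min_le_right _ _)

theorem stmt12 (S : Set ℝ) (hScount : S.Countable) (hSpos : S ⊆ Set.Ioi (0 : ℝ))
    (hSdense : ∀ a b : ℝ, 0 < a → a < b → ∃ s ∈ S, a < s ∧ s < b)
    (n : ℕ) (x : Fin n → EuclideanSpace ℝ (Fin n))
    (hnorm : ∀ i, ‖x i‖ = 1) (hli : LinearIndependent ℝ x)
    (ε : ℝ) (hε : 0 < ε) :
    ∃ z : EuclideanSpace ℝ (Fin (n + 1)), ‖z‖ = 1 ∧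
      LinearIndependent ℝ (Fin.snoc (fun i => embedSucc n (x i)) z) ∧
      (∀ i, dist z (embedSucc n (x i)) ∈ S) ∧
      ∀ i, |(inner ℝ z (embedSucc n (x i)) : ℝ)| < ε :=
  stmt12_general S hSdense n x hnorm hli ε hε
end
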